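/- Let p ≥ 1 and 0 < r < s. For all probability measures φ and ψ on ℝ with characteristic functions φ̂ and ψ̂, if d_s(φ,ψ) = sup_{ξ≠0} |φ̂(ξ) − ψ̂(ξ)|/|ξ|^s is finite, then D_{r,p}(φ,ψ) = (∫_ℝ |ξ|^{−(pr+1)} |φ̂(ξ) − ψ̂(ξ)|^p dξ)^{1/p} satisfies D_{r,p}(φ,ψ) ≤ c(p,r,s)·d_s(φ,ψ)^{r/s}, where c(p,r,s) = 2^{1−r/s}·(2s/(p r (s−r)))^{1/p}. -/

import Mathlib

open MeasureTheory

/-- The characteristic function (Fourier transform) of a measure on `ℝ`,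
`φ̂(ξ) = ∫ e^{-iξv} dφ(v)`. -/
noncomputable def charFn (μ : Measure ℝ) (ξ : ℝ) : ℂ :=
  ∫ v, Complex.exp (-(ξ * v) * Complex.I) ∂μ

/-- The Fourier-based metric `d_s(φ,ψ) = sup_{ξ ≠ 0} |φ̂(ξ) - ψ̂(ξ)| / |ξ|^s`. -/
noncomputable def dFourier (s : ℝ) (φ ψ : Measure ℝ) : ℝ :=
  ⨆ ξ : {ξ : ℝ // ξ ≠ 0}, ‖charFn φ ξ.1 - charFn ψ ξ.1‖ / |ξ.1| ^ s

/-- The Fourier-based metric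
`D_{s,p}(φ,ψ) = (∫_ℝ |ξ|^{-(ps+1)} |φ̂(ξ) - ψ̂(ξ)|^p dξ)^{1/p}`. -/
noncomputable def DFourierP (s p : ℝ) (φ ψ : Measure ℝ) : ℝ :=
  (∫ ξ : ℝ, |ξ| ^ (-(p * s + 1)) * ‖charFn φ ξ - charFn ψ ξ‖ ^ p) ^ (1 / p)

/-
Write `Δ(ξ) = |φ̂(ξ) - ψ̂(ξ)|` and `d = d_s(φ, ψ)`. Then `Δ ≤ min(2, d|ξ|^s)`, so the integrand of
`D_{r,p}^p` is dominated by the even function `min(2^p, d^p |ξ|^{ps}) |ξ|^{-(pr+1)}`. On `(0, ∞)`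
this envelope is a pure power on each side of the radius `R` where `d R^s = 2`, and its integral
is computed exactly: the two pieces are `d^p R^{p(s-r)} / (p(s-r))` and `2^p R^{-pr} / (pr)`,
equal by the choice of `R`. Their sum, doubled for `ξ < 0`, is `c(p,r,s)^p d^{pr/s}`.
-/

open Set Real

theorem integrable_comp_abs {E : Type*} [NormedAddCommGroup E] {f : ℝ → E}
    (hf : IntegrableOn f (Ioi 0)) : Integrable (fun x => f |x|) := by
  have hIoi : IntegrableOn (fun x => f |x|) (Ioi 0) :=
    hf.congr_fun (fun x hx => by rw [abs_of_pos hx]) measurableSet_Ioi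
  have hIic : IntegrableOn (fun x => f |x|) (Iic 0) := by
    rw [← Measure.map_neg_eq_self (volume : Measure ℝ),
      measurableEmbedding_neg.integrableOn_map_iff]
    simp_rw [Function.comp_def, abs_neg, neg_preimage, neg_Iic, neg_zero]
    exact (integrableOn_Ici_iff_integrableOn_Ioi (by simp)).mpr hIoi
  rw [← integrableOn_univ, ← Iic_union_Ioi (a := 0)]
  exact hIic.union hIoi

section MinRpow

variable {A B R α β : ℝ}

theorem min_mul_rpow_eqOn_Ioc (hB : 0 ≤ B) (hα : 0 ≤ α) :
    EqOn (fun x => min (B * R ^ α) (B * x ^ α) * x ^ (-(β + 1)))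
      (fun x => B * x ^ (α - (β + 1))) (Ioc 0 R) := by
  rintro x ⟨hx0, hxR⟩
  have hle : B * x ^ α ≤ B * R ^ α :=
    mul_le_mul_of_nonneg_left (rpow_le_rpow hx0.le hxR hα) hB
  simp only [min_eq_right hle, mul_assoc, ← rpow_add hx0, sub_eq_add_neg]

theorem min_mul_rpow_eqOn_Ioi (hB : 0 ≤ B) (hα : 0 ≤ α) (hR : 0 ≤ R) :
    EqOn (fun x => min (B * R ^ α) (B * x ^ α) * x ^ (-(β + 1)))
      (fun x => B * R ^ α * x ^ (-(β + 1))) (Ioi R) := by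
  intro x hx
  have hle : B * R ^ α ≤ B * x ^ α :=
    mul_le_mul_of_nonneg_left (rpow_le_rpow hR (le_of_lt hx) hα) hB
  simp only [min_eq_left hle]

theorem integrableOn_Ioi_min_mul_rpow' (hB : 0 ≤ B) (hβ : 0 < β) (hβα : β < α) (hR : 0 < R) :
    IntegrableOn (fun x => min (B * R ^ α) (B * x ^ α) * x ^ (-(β + 1))) (Ioi 0) := by
  have hα : 0 ≤ α := by linarith
  rw [← Ioc_union_Ioi_eq_Ioi hR.le]
  refine IntegrableOn.union ?_ ?_
  · refine IntegrableOn.congr_fun ?_ (min_mul_rpow_eqOn_Ioc hB hα).symm measurableSet_Ioc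
    exact Integrable.const_mul ((intervalIntegrable_iff_integrableOn_Ioc_of_le hR.le).mp
      (intervalIntegral.intervalIntegrable_rpow' (by linarith))) B
  · refine IntegrableOn.congr_fun ?_ (min_mul_rpow_eqOn_Ioi hB hα hR.le).symm measurableSet_Ioi
    exact (integrableOn_Ioi_rpow_of_lt (by linarith) hR).const_mul _

theorem integral_Ioi_min_mul_rpow' (hB : 0 ≤ B) (hβ : 0 < β) (hβα : β < α) (hR : 0 < R) :
    ∫ x in Ioi 0, min (B * R ^ α) (B * x ^ α) * x ^ (-(β + 1)) =
      α / (β * (α - β)) * (B * R ^ (α - β)) := by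
  have hα : 0 ≤ α := by linarith
  rw [← Ioc_union_Ioi_eq_Ioi hR.le, setIntegral_union (Ioc_disjoint_Ioi le_rfl) measurableSet_Ioi
    ((integrableOn_Ioi_min_mul_rpow' hB hβ hβα hR).mono_set Ioc_subset_Ioi_self)
    ((integrableOn_Ioi_min_mul_rpow' hB hβ hβα hR).mono_set (Ioi_subset_Ioi hR.le)),
    setIntegral_congr_fun measurableSet_Ioc (min_mul_rpow_eqOn_Ioc hB hα),
    setIntegral_congr_fun measurableSet_Ioi (min_mul_rpow_eqOn_Ioi hB hα hR.le),
    integral_const_mul, integral_const_mul, ← intervalIntegral.integral_of_le hR.le,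
    integral_rpow (Or.inl (by linarith)), integral_Ioi_rpow_of_lt (by linarith) hR,
    show α - (β + 1) + 1 = α - β by ring, show -(β + 1) + 1 = -β by ring,
    zero_rpow (by linarith), rpow_sub hR, rpow_neg hR.le]
  have hRβ : 0 < R ^ β := rpow_pos_of_pos hR β
  have hαβ : 0 < α - β := by linarith
  field_simp
  ring

theorem integrableOn_Ioi_min_mul_rpow (hA : 0 < A) (hB : 0 ≤ B) (hβ : 0 < β) (hβα : β < α) :
    IntegrableOn (fun x => min A (B * x ^ α) * x ^ (-(β + 1))) (Ioi 0) := by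
  rcases hB.eq_or_lt with rfl | hB
  · simp [hA.le]
  obtain ⟨R, hR, rfl⟩ : ∃ R, 0 < R ∧ B * R ^ α = A := by
    refine ⟨(A / B) ^ α⁻¹, by positivity, ?_⟩
    rw [rpow_inv_rpow (by positivity) (by linarith), mul_div_cancel₀ _ hB.ne']
  exact integrableOn_Ioi_min_mul_rpow' hB.le hβ hβα hR

theorem integral_Ioi_min_mul_rpow (hA : 0 < A) (hB : 0 ≤ B) (hβ : 0 < β) (hβα : β < α) :
    ∫ x in Ioi 0, min A (B * x ^ α) * x ^ (-(β + 1)) =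
      α / (β * (α - β)) * (A ^ (1 - β / α) * B ^ (β / α)) := by
  have hα : 0 < α := hβ.trans hβα
  rcases hB.eq_or_lt with rfl | hB
  · simp [hA.le, zero_rpow (div_pos hβ hα).ne']
  obtain ⟨R, hR, rfl⟩ : ∃ R, 0 < R ∧ B * R ^ α = A := by
    refine ⟨(A / B) ^ α⁻¹, by positivity, ?_⟩
    rw [rpow_inv_rpow (by positivity) hα.ne', mul_div_cancel₀ _ hB.ne']
  rw [integral_Ioi_min_mul_rpow' hB.le hβ hβα hR, mul_rpow hB.le (by positivity),
    ← rpow_mul hR.le, mul_right_comm, ← rpow_add hB, sub_add_cancel, rpow_one,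
    show α * (1 - β / α) = α - β by field_simp]

end MinRpow

theorem norm_charFn_le_one (μ : Measure ℝ) [IsProbabilityMeasure μ] (ξ : ℝ) :
    ‖charFn μ ξ‖ ≤ 1 := by
  simpa [charFn] using norm_integral_le_of_norm_le_const (μ := μ) (C := 1)
    (f := fun v : ℝ => Complex.exp (-(ξ * v) * Complex.I))
    (ae_of_all _ fun v => by simp [Complex.norm_exp])

section FourierMetric

variable {φ ψ : Measure ℝ} {p s : ℝ}

theorem norm_charFn_sub_le_two [IsProbabilityMeasure φ] [IsProbabilityMeasure ψ] (ξ : ℝ) :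
    ‖charFn φ ξ - charFn ψ ξ‖ ≤ 2 :=
  (norm_sub_le _ _).trans (by linarith [norm_charFn_le_one φ ξ, norm_charFn_le_one ψ ξ])

theorem dFourier_nonneg : 0 ≤ dFourier s φ ψ :=
  Real.iSup_nonneg fun _ => by positivity

theorem norm_charFn_sub_le_dFourier_mul
    (hfin : BddAbove (range fun ξ : {ξ : ℝ // ξ ≠ 0} =>
      ‖charFn φ ξ.1 - charFn ψ ξ.1‖ / |ξ.1| ^ s)) {ξ : ℝ} (hξ : ξ ≠ 0) :
    ‖charFn φ ξ - charFn ψ ξ‖ ≤ dFourier s φ ψ * |ξ| ^ s :=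
  (div_le_iff₀ (rpow_pos_of_pos (abs_pos.2 hξ) s)).1 (le_ciSup hfin ⟨ξ, hξ⟩)

theorem norm_charFn_sub_rpow_le_min [IsProbabilityMeasure φ] [IsProbabilityMeasure ψ]
    (hfin : BddAbove (range fun ξ : {ξ : ℝ // ξ ≠ 0} =>
      ‖charFn φ ξ.1 - charFn ψ ξ.1‖ / |ξ.1| ^ s)) (hp : 0 ≤ p) {ξ : ℝ} (hξ : ξ ≠ 0) :
    ‖charFn φ ξ - charFn ψ ξ‖ ^ p ≤ min (2 ^ p) (dFourier s φ ψ ^ p * |ξ| ^ (p * s)) := by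
  refine le_min (rpow_le_rpow (norm_nonneg _) (norm_charFn_sub_le_two ξ) hp) ?_
  calc ‖charFn φ ξ - charFn ψ ξ‖ ^ p ≤ (dFourier s φ ψ * |ξ| ^ s) ^ p :=
        rpow_le_rpow (norm_nonneg _) (norm_charFn_sub_le_dFourier_mul hfin hξ) hp
    _ = dFourier s φ ψ ^ p * |ξ| ^ (p * s) := by
        rw [mul_rpow dFourier_nonneg (by positivity), ← rpow_mul (abs_nonneg ξ), mul_comm s]

theorem abs_rpow_mul_norm_charFn_sub_rpow_le [IsProbabilityMeasure φ] [IsProbabilityMeasure ψ]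
    (hfin : BddAbove (range fun ξ : {ξ : ℝ // ξ ≠ 0} =>
      ‖charFn φ ξ.1 - charFn ψ ξ.1‖ / |ξ.1| ^ s)) (hp : 0 ≤ p) {γ : ℝ} (hγ : γ ≠ 0) (ξ : ℝ) :
    |ξ| ^ γ * ‖charFn φ ξ - charFn ψ ξ‖ ^ p ≤
      min (2 ^ p) (dFourier s φ ψ ^ p * |ξ| ^ (p * s)) * |ξ| ^ γ := by
  rcases eq_or_ne ξ 0 with rfl | hξ
  · simp only [abs_zero, zero_rpow hγ, zero_mul, mul_zero, le_refl]
  rw [mul_comm]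
  exact mul_le_mul_of_nonneg_right (norm_charFn_sub_rpow_le_min hfin hp hξ) (by positivity)

end FourierMetric

theorem stmt_1 (p r s : ℝ) (hp : 1 ≤ p) (hr : 0 < r) (hrs : r < s)
    (φ ψ : Measure ℝ) [IsProbabilityMeasure φ] [IsProbabilityMeasure ψ]
    (hfin : BddAbove (Set.range fun ξ : {ξ : ℝ // ξ ≠ 0} =>
      ‖charFn φ ξ.1 - charFn ψ ξ.1‖ / |ξ.1| ^ s)) :
    DFourierP r p φ ψ ≤
      2 ^ (1 - r / s) * (2 * s / (p * r * (s - r))) ^ (1 / p) *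
        dFourier s φ ψ ^ (r / s) := by
  have hp0 : 0 < p := by linarith
  have hs : 0 < s := hr.trans hrs
  have hsr : 0 < s - r := by linarith
  have hpr : 0 < p * r := mul_pos hp0 hr
  have hprs : p * r < p * s := mul_lt_mul_of_pos_left hrs hp0
  have hd : 0 ≤ dFourier s φ ψ := dFourier_nonneg
  set d := dFourier s φ ψ
  have hI : ∫ ξ, |ξ| ^ (-(p * r + 1)) * ‖charFn φ ξ - charFn ψ ξ‖ ^ p ≤
      2 * (p * s / (p * r * (p * s - p * r)) *
        ((2 ^ p) ^ (1 - p * r / (p * s)) * (d ^ p) ^ (p * r / (p * s)))) := by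
    rw [← integral_Ioi_min_mul_rpow (by positivity) (by positivity) hpr hprs,
      ← integral_comp_abs (f := fun x => min (2 ^ p) (d ^ p * x ^ (p * s)) * x ^ (-(p * r + 1)))]
    exact integral_mono_of_nonneg (ae_of_all _ fun ξ => by positivity)
      (integrable_comp_abs (integrableOn_Ioi_min_mul_rpow (by positivity) (by positivity) hpr hprs))
      (ae_of_all _ (abs_rpow_mul_norm_charFn_sub_rpow_le hfin hp0.le (by linarith)))
  have hC : 2 * (p * s / (p * r * (p * s - p * r)) *
      ((2 ^ p) ^ (1 - p * r / (p * s)) * (d ^ p) ^ (p * r / (p * s)))) =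
      (2 ^ (1 - r / s) * (2 * s / (p * r * (s - r))) ^ (1 / p) * d ^ (r / s)) ^ p := by
    rw [mul_div_mul_left r s hp0.ne', ← rpow_mul (by norm_num), ← rpow_mul hd,
      mul_rpow (by positivity) (by positivity), mul_rpow (by positivity) (by positivity),
      ← rpow_mul (by norm_num), ← rpow_mul hd, one_div, rpow_inv_rpow (by positivity) hp0.ne']
    field_simp
  calc DFourierP r p φ ψ ≤ _ := rpow_le_rpow (integral_nonneg fun ξ => by positivity) hI
        (by positivity)
    _ = _ := by rw [hC, one_div, rpow_rpow_inv (by positivity) hp0.ne']
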